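/- (Limit of the rescaled cell length, step (a) in the proof of Prop. 4.3.) Let l : (0,1) → ℝ be continuously differentiable with l(t) ≥ l_0 > 0 for all t. Let x ∈ (0,1) satisfy x·l'(x) ≠ l(x). Let ε_n → 0⁺, let p_n be natural numbers, and let a_n, b_n ∈ (0,1) with a_n < b_n, a_n → x, b_n → x, a_n = ε_n p_n l(a_n), and b_n = ε_n (p_n + 1) l(b_n). Then for all sufficiently large n one has 1 − (a_n/l(a_n))·((l(b_n) − l(a_n))/(b_n − a_n)) ≠ 0, and (b_n − a_n)/(ε_n l(a_n)) → (1 − x·l'(x)/l(x))^{−1} as n → ∞. -/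

import Mathlib

open MeasureTheory Set Filter Topology

noncomputable section

/-- The thin domain `R^ε = {(x,y) : x ∈ (0,1), 0 < y < ε G(x, x/ε)}`. -/
def thinDomain (G : ℝ → ℝ → ℝ) (ε : ℝ) : Set (ℝ × ℝ) :=
  {z : ℝ × ℝ | z.1 ∈ Ioo (0 : ℝ) 1 ∧ z.2 ∈ Ioo (0 : ℝ) (ε * G z.1 (z.1 / ε))}

/-- The reference cell `Y* = (0,l₁) × (0,G₁)`. -/
def Ystar (l1 G1 : ℝ) : Set (ℝ × ℝ) := Ioo (0 : ℝ) l1 ×ˢ Ioo (0 : ℝ) G1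

/-- A partition `0 = x₀ < x₁ < ⋯ < x_{N+1} = 1` of the interval `(0,1)` (for a parameter `ε`). -/
structure CellPartition where
  N : ℕ
  pts : ℕ → ℝ
  pts_zero : pts 0 = 0
  pts_last : pts (N + 1) = 1
  pts_lt : ∀ k ≤ N, pts k < pts (k + 1)

/-- The index `k` such that `x ∈ [x_k, x_{k+1})` (for `x ∈ [0,1)`). -/
def CellPartition.idx (P : CellPartition) (x : ℝ) : ℕ :=
  Nat.findGreatest (fun k => P.pts k ≤ x) P.N

/-- `[x]_ε`, the partition point just below `x`. -/
def CellPartition.bracket (P : CellPartition) (x : ℝ) : ℝ := P.pts (P.idx x)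

/-- `Γ_{[x]_ε} = (x_{k+1} - x_k) / l(x_k)` for `x ∈ [x_k, x_{k+1})`. -/
def CellPartition.Gamma (P : CellPartition) (l : ℝ → ℝ) (x : ℝ) : ℝ :=
  (P.pts (P.idx x + 1) - P.pts (P.idx x)) / l (P.pts (P.idx x))

/-- The unfolding operator `T_ε` associated to a partition, acting on a function `φ` on `R^ε`
(extended by zero to all of `ℝ²` via the indicator of `R^ε`). -/
def unfoldOp (G : ℝ → ℝ → ℝ) (l : ℝ → ℝ) (ε : ℝ) (P : CellPartition)
    (φ : ℝ × ℝ → ℝ) : ℝ × ℝ × ℝ → ℝ := fun q =>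
  if q.2.1 < l (P.bracket q.1) then
    (thinDomain G ε).indicator φ (P.bracket q.1 + P.Gamma l q.1 * q.2.1, ε * q.2.2)
  else 0

/-- The averaging operator `U_ε`, the formal adjoint of `T_ε`. -/
def avgOp (l : ℝ → ℝ) (ε : ℝ) (P : CellPartition) (ψ : ℝ × ℝ × ℝ → ℝ) : ℝ × ℝ → ℝ := fun z =>
  (1 / l (P.bracket z.1)) *
    ∫ y₁ in Ioo (0 : ℝ) (l (P.bracket z.1)),
      ψ (P.bracket z.1 + P.Gamma l z.1 * y₁, (z.1 - P.bracket z.1) / P.Gamma l z.1, z.2 / ε)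

/-- The limit set `W = {(x,y₁,y₂) : x ∈ (0,1), 0 < y₁ < l(x), 0 < y₂ < G(x,y₁)}`. -/
def Wset (G : ℝ → ℝ → ℝ) (l : ℝ → ℝ) : Set (ℝ × ℝ × ℝ) :=
  {q | q.1 ∈ Ioo (0 : ℝ) 1 ∧ q.2.1 ∈ Ioo (0 : ℝ) (l q.1) ∧ q.2.2 ∈ Ioo (0 : ℝ) (G q.1 q.2.1)}

/-- The set `W₀ = {(x,y₁) : x ∈ (0,1), 0 < y₁ < l(x)}`. -/
def W0set (l : ℝ → ℝ) : Set (ℝ × ℝ) :=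
  {z : ℝ × ℝ | z.1 ∈ Ioo (0 : ℝ) 1 ∧ z.2 ∈ Ioo (0 : ℝ) (l z.1)}

/-!
Subtracting the cell relations `a = ε p l(a)` and `b = ε (p + 1) l(b)` gives
`b - a = ε l(b) + (a / l(a)) (l(b) - l(a))`, so `D = 1 - (a / l(a)) · slope l a b` equals
`ε l(b) / (b - a)` and `(b - a) / (ε l(a)) = (l(b) / l(a)) / D`. A `C¹` function is strictly
differentiable, so its slopes over the shrinking intervals `[aₙ, bₙ]` tend to `l'(x)`; hence
`Dₙ → 1 - x l'(x) / l(x)`, which is nonzero by assumption.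
-/

theorem HasStrictDerivAt.tendsto_slope_of_tendsto {𝕜 F ι : Type*} [NontriviallyNormedField 𝕜]
    [NormedAddCommGroup F] [NormedSpace 𝕜 F] {f : 𝕜 → F} {f' : F} {x : 𝕜} {L : Filter ι}
    {a b : ι → 𝕜} (hf : HasStrictDerivAt f f' x) (ha : Tendsto a L (𝓝 x))
    (hb : Tendsto b L (𝓝 x)) (hab : ∀ᶠ i in L, a i ≠ b i) :
    Tendsto (fun i => slope f (a i) (b i)) L (𝓝 f') := by
  have hrem := (hasDerivAtFilter_iff_tendsto.1 hf).comp (hb.prodMk_nhds ha)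
  rw [tendsto_iff_norm_sub_tendsto_zero]
  refine hrem.congr' ?_
  filter_upwards [hab] with i hi
  have hne : b i - a i ≠ 0 := sub_ne_zero.2 hi.symm
  rw [Function.comp_apply, slope_def_module, ← norm_inv, ← norm_smul, smul_sub,
    inv_smul_smul₀ hne]

theorem one_sub_div_mul_slope_eq_of_cell {K : Type*} [Field K] {a b la lb ε p : K}
    (hla : la ≠ 0) (hab : a ≠ b) (ha : a = ε * p * la) (hb : b = ε * (p + 1) * lb) :
    1 - a / la * ((lb - la) / (b - a)) = ε * lb / (b - a) := by
  have hba : b - a ≠ 0 := sub_ne_zero.2 hab.symm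
  field_simp
  linear_combination la * hb - lb * ha

theorem rescaled_cell_length_limit_general
    (l0 : ℝ) (hl0 : 0 < l0)
    (l : ℝ → ℝ) (hlC1 : ContDiffOn ℝ 1 l (Ioo 0 1))
    (hlb : ∀ t ∈ Ioo (0 : ℝ) 1, l0 ≤ l t)
    (x : ℝ) (hx : x ∈ Ioo (0 : ℝ) 1) (hnd : x * deriv l x ≠ l x)
    (ε : ℕ → ℝ) (hεpos : ∀ n, 0 < ε n)
    (p : ℕ → ℕ) (a b : ℕ → ℝ)
    (ha : ∀ n, a n ∈ Ioo (0 : ℝ) 1) (hb : ∀ n, b n ∈ Ioo (0 : ℝ) 1)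
    (hab : ∀ n, a n < b n)
    (hax : Tendsto a atTop (𝓝 x)) (hbx : Tendsto b atTop (𝓝 x))
    (haeq : ∀ n, a n = ε n * (p n : ℝ) * l (a n))
    (hbeq : ∀ n, b n = ε n * ((p n : ℝ) + 1) * l (b n))
    : (∀ᶠ n in atTop,
        1 - a n / l (a n) * ((l (b n) - l (a n)) / (b n - a n)) ≠ 0) ∧
      Tendsto (fun n => (b n - a n) / (ε n * l (a n))) atTop
        (𝓝 (1 - x * deriv l x / l x)⁻¹) := by
  have hx_nhds : Ioo (0 : ℝ) 1 ∈ 𝓝 x := isOpen_Ioo.mem_nhds hx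
  have hl_pos : ∀ t ∈ Ioo (0 : ℝ) 1, 0 < l t := fun t ht => hl0.trans_le (hlb t ht)
  have hlx : l x ≠ 0 := (hl_pos x hx).ne'
  have hl_cont : ContinuousAt l x := hlC1.continuousOn.continuousAt hx_nhds
  have hla_lim : Tendsto (fun n => l (a n)) atTop (𝓝 (l x)) := hl_cont.tendsto.comp hax
  have hlb_lim : Tendsto (fun n => l (b n)) atTop (𝓝 (l x)) := hl_cont.tendsto.comp hbx
  have hslope : Tendsto (fun n => (l (b n) - l (a n)) / (b n - a n)) atTop
      (𝓝 (deriv l x)) := by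
    simpa only [slope_def_field] using
      ((hlC1.contDiffAt hx_nhds).hasStrictDerivAt one_ne_zero).tendsto_slope_of_tendsto hax hbx
        (.of_forall fun n => (hab n).ne)
  have hD : Tendsto (fun n => 1 - a n / l (a n) * ((l (b n) - l (a n)) / (b n - a n))) atTop
      (𝓝 (1 - x * deriv l x / l x)) := by
    rw [mul_div_right_comm]
    exact tendsto_const_nhds.sub ((hax.div hla_lim hlx).mul hslope)
  have hL : 1 - x * deriv l x / l x ≠ 0 := by
    rwa [sub_ne_zero, ne_comm, Ne, div_eq_one_iff_eq hlx]
  refine ⟨hD.eventually_ne hL, ?_⟩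
  have hrescaled : ∀ n, (b n - a n) / (ε n * l (a n)) =
      l (b n) / l (a n) * (1 - a n / l (a n) * ((l (b n) - l (a n)) / (b n - a n)))⁻¹ := by
    intro n
    rw [one_sub_div_mul_slope_eq_of_cell (hl_pos _ (ha n)).ne' (hab n).ne (haeq n) (hbeq n)]
    field_simp [(hεpos n).ne', (hl_pos _ (hb n)).ne']
  simpa only [hrescaled, Pi.div_apply, div_self hlx, one_mul] using
    (hlb_lim.div hla_lim hlx).mul (hD.inv₀ hL)

/-- Limit of the rescaled cell length (step (a) in the proof of Prop. 4.3). -/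
theorem rescaled_cell_length_limit
    (l0 : ℝ) (hl0 : 0 < l0)
    (l : ℝ → ℝ) (hlC1 : ContDiffOn ℝ 1 l (Ioo 0 1))
    (hlb : ∀ t ∈ Ioo (0 : ℝ) 1, l0 ≤ l t)
    (x : ℝ) (hx : x ∈ Ioo (0 : ℝ) 1) (hnd : x * deriv l x ≠ l x)
    (ε : ℕ → ℝ) (hεpos : ∀ n, 0 < ε n) (hε : Tendsto ε atTop (𝓝 0))
    (p : ℕ → ℕ) (a b : ℕ → ℝ)
    (ha : ∀ n, a n ∈ Ioo (0 : ℝ) 1) (hb : ∀ n, b n ∈ Ioo (0 : ℝ) 1)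
    (hab : ∀ n, a n < b n)
    (hax : Tendsto a atTop (𝓝 x)) (hbx : Tendsto b atTop (𝓝 x))
    (haeq : ∀ n, a n = ε n * (p n : ℝ) * l (a n))
    (hbeq : ∀ n, b n = ε n * ((p n : ℝ) + 1) * l (b n))
    : (∀ᶠ n in atTop,
        1 - a n / l (a n) * ((l (b n) - l (a n)) / (b n - a n)) ≠ 0) ∧
      Tendsto (fun n => (b n - a n) / (ε n * l (a n))) atTop
        (𝓝 (1 - x * deriv l x / l x)⁻¹) :=
  rescaled_cell_length_limit_general l0 hl0 l hlC1 hlb x hx hnd ε hεpos p a b ha hb hab hax hbx haeq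
    hbeq
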